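/- arXiv:1511.07469 — 7 statements merged into one kernel-verified Lean document; each statement's English description precedes it below -/
import Mathlib

section
/- Let H_u, H_s, H_d be independent exponential random variables with means σ_{uv}², σ_{sv}², σ_{dv}² respectively, and let P_u, P_s, P_d, Δ_u, N₀ > 0. Then P(P_u H_u / (P_s H_s + P_d H_d + N₀) < Δ_u) = 1 - [exp(-Δ_u N₀/(P_u σ_{uv}²))] / [(1 + Δ_u P_s σ_{sv}²/(P_u σ_{uv}²))(1 + Δ_u P_d σ_{dv}²/(P_u σ_{uv}²))]. -/
/-! Integrate `u` out first: given the interference `D = Ps s + Pd d + N0`, outage is the event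
`u < Δu D / Pu`, of probability `1 - exp (-Δu D / (Pu σuv))`. This factors as
`exp (-Δu N0 / (Pu σuv))` times exponentials in `s` and `d`, whose expectations are the Laplace
transforms `1 / (1 + t σ)` of the exponential laws. Moving the `u`-integral innermost is Fubini,
since the integrand is dominated by the product density. -/

open MeasureTheory Real Set

section Fubini

variable {α β γ : Type*} [MeasurableSpace α] [MeasurableSpace β] [MeasurableSpace γ]
  {μ : Measure α} {ν : Measure β} {ρ : Measure γ} [SFinite μ] [SFinite ν] [SFinite ρ]

theorem integral_integral_swap_of_norm_le {f : α → β → ℝ}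
    (hf : AEStronglyMeasurable (Function.uncurry f) (μ.prod ν)) {g : α → ℝ} {h : β → ℝ}
    (hg : Integrable g μ) (hh : Integrable h ν) (hle : ∀ x y, ‖f x y‖ ≤ g x * h y) :
    ∫ x, ∫ y, f x y ∂ν ∂μ = ∫ y, ∫ x, f x y ∂μ ∂ν :=
  integral_integral_swap <|
    (hg.mul_prod hh).mono' hf (Filter.Eventually.of_forall fun p => hle p.1 p.2)

theorem integral_integral_integral_rotate_of_norm_le {f : α → β → γ → ℝ}
    (hf : StronglyMeasurable fun p : (α × β) × γ => f p.1.1 p.1.2 p.2)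
    {g : α → ℝ} {h : β → ℝ} {k : γ → ℝ}
    (hg : Integrable g μ) (hh : Integrable h ν) (hk : Integrable k ρ)
    (hle : ∀ x y z, ‖f x y z‖ ≤ g x * h y * k z) :
    ∫ x, ∫ y, ∫ z, f x y z ∂ρ ∂ν ∂μ = ∫ y, ∫ z, ∫ x, f x y z ∂μ ∂ρ ∂ν := by
  have hle_outer : ∀ x y, ‖∫ z, f x y z ∂ρ‖ ≤ g x * (h y * ∫ z, k z ∂ρ) := fun x y => by
    rw [← mul_assoc, ← integral_const_mul]
    exact norm_integral_le_of_norm_le (hk.const_mul _) (Filter.Eventually.of_forall (hle x y))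
  rw [integral_integral_swap_of_norm_le hf.integral_prod_right'.aestronglyMeasurable hg
    (hh.mul_const _) hle_outer]
  refine integral_congr_ae (Filter.Eventually.of_forall fun y => ?_)
  exact integral_integral_swap_of_norm_le
    (hf.comp_measurable (measurable_fst.prodMk measurable_const |>.prodMk measurable_snd :
      Measurable fun p : α × γ => ((p.1, y), p.2))).aestronglyMeasurable hg (hk.const_mul (h y))
    fun x z => (hle x y z).trans_eq (mul_assoc _ _ _)

end Fubini

section ExponentialDensity

variable {σ : ℝ}

theorem integral_exp_density_Ioi (hσ : 0 < σ) (a : ℝ) :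
    ∫ x in Ioi a, 1 / σ * exp (-x / σ) = exp (-a / σ) := by
  have h : ∀ x, -x / σ = -σ⁻¹ * x := fun x => by ring
  simp_rw [h]
  rw [integral_const_mul, integral_exp_mul_Ioi (neg_neg_of_pos (inv_pos.2 hσ))]
  field_simp

theorem integrableOn_exp_density (hσ : 0 < σ) (a : ℝ) :
    IntegrableOn (fun x => 1 / σ * exp (-x / σ)) (Ioi a) :=
  Integrable.of_integral_ne_zero <| by rw [integral_exp_density_Ioi hσ]; positivity

theorem integral_ite_lt_mul_exp_density (hσ : 0 < σ) {X : ℝ} (hX : 0 ≤ X) :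
    ∫ u in Ioi 0, (if u < X then (1 : ℝ) else 0) * (1 / σ * exp (-u / σ)) = 1 - exp (-X / σ) := by
  have hind : ∀ u, (if u < X then (1 : ℝ) else 0) * (1 / σ * exp (-u / σ))
      = (Iio X).indicator (fun u => 1 / σ * exp (-u / σ)) u := fun u => by
    by_cases hu : u < X <;> simp [hu]
  have htotal := integral_exp_density_Ioi hσ 0
  rw [← Ioc_union_Ioi_eq_Ioi hX, setIntegral_union (Ioc_disjoint_Ioi le_rfl) measurableSet_Ioi
    ((integrableOn_exp_density hσ 0).mono_set Ioc_subset_Ioi_self) (integrableOn_exp_density hσ X),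
    integral_exp_density_Ioi hσ, neg_zero, zero_div, exp_zero] at htotal
  simp_rw [hind]
  rw [setIntegral_indicator measurableSet_Iio, Ioi_inter_Iio, ← integral_Ioc_eq_integral_Ioo]
  linarith

theorem integral_exp_density_mul_exp (hσ : 0 < σ) {t : ℝ} (ht : 0 < 1 + t * σ) :
    ∫ x in Ioi 0, 1 / σ * exp (-x / σ) * exp (-(t * x)) = 1 / (1 + t * σ) := by
  have h : ∀ x, 1 / σ * exp (-x / σ) * exp (-(t * x))
      = 1 / (1 + t * σ) * (1 / (σ / (1 + t * σ)) * exp (-x / (σ / (1 + t * σ)))) := fun x => by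
    rw [mul_assoc, ← exp_add, show -x / σ + -(t * x) = -x / (σ / (1 + t * σ)) by field_simp; ring]
    field_simp
    exact (div_self (by linarith)).symm
  simp_rw [h]
  rw [integral_const_mul, integral_exp_density_Ioi (div_pos hσ ht), neg_zero, zero_div, exp_zero,
    mul_one]

theorem integral_exp_density_mul_one_sub_exp (hσ : 0 < σ) (C : ℝ) {t : ℝ} (ht : 0 < 1 + t * σ) :
    ∫ x in Ioi 0, 1 / σ * exp (-x / σ) * (1 - C * exp (-(t * x))) = 1 - C / (1 + t * σ) := by
  have h : ∀ x, 1 / σ * exp (-x / σ) * (1 - C * exp (-(t * x)))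
      = 1 / σ * exp (-x / σ) - C * (1 / σ * exp (-x / σ) * exp (-(t * x))) := fun x => by ring
  simp_rw [h]
  rw [integral_sub (integrableOn_exp_density hσ 0) ?_, integral_const_mul C,
    integral_exp_density_Ioi hσ, integral_exp_density_mul_exp hσ ht, neg_zero, zero_div, exp_zero]
  · ring
  refine (Integrable.of_integral_ne_zero ?_).const_mul C
  rw [integral_exp_density_mul_exp hσ ht]
  positivity

theorem integral_ite_div_lt_mul_exp_density (hσ : 0 < σ) {P D Δ : ℝ} (hP : 0 < P) (hD : 0 < D)
    (hΔ : 0 ≤ Δ) :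
    ∫ u in Ioi 0, (if P * u / D < Δ then (1 : ℝ) else 0) * (1 / σ * exp (-u / σ))
      = 1 - exp (-(Δ * D) / (P * σ)) := by
  have hiff : ∀ u, P * u / D < Δ ↔ u < Δ * D / P := fun u => by
    rw [div_lt_iff₀ hD, lt_div_iff₀ hP, mul_comm u]
  simp_rw [hiff]
  rw [integral_ite_lt_mul_exp_density hσ (by positivity), neg_div, div_div, neg_div]

end ExponentialDensity

theorem integral_Ioi_rotate_mul_exp_density {φ : ℝ → ℝ → ℝ → ℝ}
    (hφ : Measurable fun p : (ℝ × ℝ) × ℝ => φ p.1.1 p.1.2 p.2) (hφ_le : ∀ x y z, ‖φ x y z‖ ≤ 1)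
    {σ₁ σ₂ σ₃ : ℝ} (hσ₁ : 0 < σ₁) (hσ₂ : 0 < σ₂) (hσ₃ : 0 < σ₃) :
    ∫ x in Ioi 0, ∫ y in Ioi 0, ∫ z in Ioi 0, φ x y z * (1 / σ₁ * exp (-x / σ₁)) *
        (1 / σ₂ * exp (-y / σ₂)) * (1 / σ₃ * exp (-z / σ₃))
      = ∫ y in Ioi 0, ∫ z in Ioi 0, ∫ x in Ioi 0, φ x y z * (1 / σ₁ * exp (-x / σ₁)) *
        (1 / σ₂ * exp (-y / σ₂)) * (1 / σ₃ * exp (-z / σ₃)) := by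
  refine integral_integral_integral_rotate_of_norm_le
    (((hφ.mul (by fun_prop)).mul (by fun_prop)).mul (by fun_prop)).stronglyMeasurable
    (integrableOn_exp_density hσ₁ 0) (integrableOn_exp_density hσ₂ 0)
    (integrableOn_exp_density hσ₃ 0) fun x y z => ?_
  simp only [norm_mul, norm_div, norm_one, Real.norm_eq_abs, abs_exp, abs_of_pos hσ₁,
    abs_of_pos hσ₂, abs_of_pos hσ₃]
  calc _ ≤ 1 * (1 / σ₁ * exp (-x / σ₁)) * (1 / σ₂ * exp (-y / σ₂)) * (1 / σ₃ * exp (-z / σ₃)) := by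
        gcongr
        exact hφ_le x y z
    _ = _ := by rw [one_mul]

/-- Primary outage probability with two secondary interferers (equation (3)):
`P(Pu·Hu / (Ps·Hs + Pd·Hd + N0) < Δu)` for independent exponential channel gains. -/
theorem stmt_1 (Pu Ps Pd Δu N0 σuv σsv σdv : ℝ)
    (hPu : 0 < Pu) (hPs : 0 < Ps) (hPd : 0 < Pd) (hΔu : 0 < Δu) (hN0 : 0 < N0)
    (hσuv : 0 < σuv) (hσsv : 0 < σsv) (hσdv : 0 < σdv) :
    (∫ u in Set.Ioi (0:ℝ), ∫ s in Set.Ioi (0:ℝ), ∫ d in Set.Ioi (0:ℝ),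
        (if Pu * u / (Ps * s + Pd * d + N0) < Δu then (1:ℝ) else 0) *
          ((1 / σuv) * Real.exp (-u / σuv)) *
          ((1 / σsv) * Real.exp (-s / σsv)) *
          ((1 / σdv) * Real.exp (-d / σdv)))
      = 1 - Real.exp (-(Δu * N0) / (Pu * σuv)) /
          ((1 + Δu * Ps * σsv / (Pu * σuv)) * (1 + Δu * Pd * σdv / (Pu * σuv))) := by
  set K := exp (-(Δu * N0) / (Pu * σuv))
  set ts := Δu * Ps / (Pu * σuv)
  set td := Δu * Pd / (Pu * σuv)
  have hts : 0 < 1 + ts * σsv := by positivity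
  have htd : 0 < 1 + td * σdv := by positivity
  have given_interference : ∀ s ∈ Ioi (0 : ℝ), ∀ d ∈ Ioi (0 : ℝ),
      ∫ u in Ioi 0, (if Pu * u / (Ps * s + Pd * d + N0) < Δu then (1:ℝ) else 0) *
          (1 / σuv * exp (-u / σuv)) * (1 / σsv * exp (-s / σsv)) * (1 / σdv * exp (-d / σdv))
        = 1 / σsv * exp (-s / σsv) *
          (1 / σdv * exp (-d / σdv) * (1 - K * exp (-(ts * s)) * exp (-(td * d)))) := by
    intro s hs d hd
    have hD : 0 < Ps * s + Pd * d + N0 := by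
      have := mem_Ioi.1 hs; have := mem_Ioi.1 hd; positivity
    have hexp : exp (-(Δu * (Ps * s + Pd * d + N0)) / (Pu * σuv))
        = K * exp (-(ts * s)) * exp (-(td * d)) := by
      rw [← exp_add, ← exp_add]
      congr 1
      simp only [ts, td]
      field_simp
      ring
    rw [integral_mul_const, integral_mul_const,
      integral_ite_div_lt_mul_exp_density hσuv hPu hD hΔu.le, hexp]
    ring
  have given_s : ∀ s ∈ Ioi (0 : ℝ),
      ∫ d in Ioi 0, ∫ u in Ioi 0, (if Pu * u / (Ps * s + Pd * d + N0) < Δu then (1:ℝ) else 0) *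
          (1 / σuv * exp (-u / σuv)) * (1 / σsv * exp (-s / σsv)) * (1 / σdv * exp (-d / σdv))
        = 1 / σsv * exp (-s / σsv) * (1 - K / (1 + td * σdv) * exp (-(ts * s))) := by
    intro s hs
    rw [setIntegral_congr_fun measurableSet_Ioi (given_interference s hs), integral_const_mul,
      integral_exp_density_mul_one_sub_exp hσdv _ htd]
    ring
  refine (integral_Ioi_rotate_mul_exp_density ?_ ?_ hσuv hσsv hσdv).trans ?_
  · exact Measurable.ite (measurableSet_lt (by fun_prop) measurable_const) measurable_const
      measurable_const
  · intro u s d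
    split_ifs <;> simp
  rw [setIntegral_congr_fun measurableSet_Ioi given_s,
    integral_exp_density_mul_one_sub_exp hσsv _ hts]
  simp only [ts, td]
  field_simp
end

section
/- Fix Δ_s, Δ_d > 0 with Δ = Δ_s + Δ_d + Δ_s Δ_d (equivalently (1+Δ_s)(1+Δ_d) = 1+Δ), and fix σ_s², σ_d² > 0. Suppose γ_s σ_s² = γ_d σ_d² = λ for some λ > 0. Let X be exponential with rate 1/(γ_s σ_s²) and Y exponential with rate 1/(γ_d σ_d²), independent. Then for every z > 0, P(X + Y ≥ Δz, X ≥ Δ_s z, Y ≥ Δ_d z) = (1 + Δ_s Δ_d z/λ)·exp(-Δ z/λ). -/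
/-! Integrating out `y` first leaves, for `x ≥ Δs z`, the density of `x` times the exponential tail
`e^{-max(Δd z, Δz - x)/λ}`. For `x ≤ Δz - Δd z` this product is the constant `e^{-Δz/λ}/λ`, contributing
`(Δz - Δd z - Δs z)/λ · e^{-Δz/λ} = Δs Δd z/λ · e^{-Δz/λ}`; beyond that point it is `e^{-Δd z/λ}` times the
density, whose tail contributes `e^{-Δz/λ}`. -/

open MeasureTheory Real Set

noncomputable def expDensity (lam t : ℝ) : ℝ := 1 / lam * exp (-t / lam)

variable {lam : ℝ}

lemma integrableOn_expDensity_Ioi (hlam : 0 < lam) (m : ℝ) :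
    IntegrableOn (expDensity lam) (Ioi m) := by
  have h : expDensity lam = fun t => 1 / lam * exp (-(1 / lam) * t) := by
    ext t; simp only [expDensity]; ring_nf
  rw [h]
  exact (exp_neg_integrableOn_Ioi m (by positivity)).const_mul _

lemma integral_expDensity_Ioi (hlam : 0 < lam) (m : ℝ) :
    ∫ t in Ioi m, expDensity lam t = exp (-m / lam) := by
  have h : ∀ t : ℝ, expDensity lam t = 1 / lam * exp (-(1 / lam * t)) := fun t => by
    simp only [expDensity]; ring_nf
  simp_rw [h]
  rw [integral_const_mul, integral_comp_mul_left_Ioi (fun t => exp (-t)) m (by positivity),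
    integral_exp_neg_Ioi, smul_eq_mul]
  field_simp

lemma integral_Ioi_zero_indicator_Ici_expDensity (hlam : 0 < lam) {m : ℝ} (hm : 0 < m) :
    ∫ t in Ioi 0, (Ici m).indicator (expDensity lam) t = exp (-m / lam) := by
  rw [setIntegral_indicator measurableSet_Ici, inter_eq_right.mpr (Ici_subset_Ioi.mpr hm),
    integral_Ici_eq_integral_Ioi, integral_expDensity_Ioi hlam]

variable {a b c : ℝ}

lemma integral_joint_expDensity_slice (hlam : 0 < lam) (hb : 0 < b) (x : ℝ) :
    ∫ y in Ioi 0, (if c ≤ x + y ∧ a ≤ x ∧ b ≤ y then (1 : ℝ) else 0) *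
        expDensity lam x * expDensity lam y
      = (Ici a).indicator (fun x => expDensity lam x * exp (-max b (c - x) / lam)) x := by
  by_cases hax : a ≤ x
  · have hslice : ∀ y, (if c ≤ x + y ∧ a ≤ x ∧ b ≤ y then (1 : ℝ) else 0) *
        expDensity lam x * expDensity lam y
          = expDensity lam x * (Ici (max b (c - x))).indicator (expDensity lam) y := by
      intro y
      by_cases hy : max b (c - x) ≤ y
      · rw [if_pos ⟨by linarith [le_max_right b (c - x)], hax, (max_le_iff.mp hy).1⟩,
          indicator_of_mem (mem_Ici.mpr hy), one_mul]
      · rw [if_neg (fun h => hy (max_le h.2.2 (by linarith [h.1]))),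
          indicator_of_notMem (fun h => hy (mem_Ici.mp h))]
        ring
    simp_rw [hslice]
    rw [integral_const_mul, integral_Ioi_zero_indicator_Ici_expDensity hlam
      (hb.trans_le (le_max_left _ _)), indicator_of_mem (mem_Ici.mpr hax)]
  · simp [hax]

lemma expDensity_mul_exp_max_of_le {x : ℝ} (hx : x ≤ c - b) :
    expDensity lam x * exp (-max b (c - x) / lam) = 1 / lam * exp (-c / lam) := by
  rw [max_eq_right (by linarith), expDensity, mul_assoc, ← exp_add]
  ring_nf

lemma expDensity_mul_exp_max_of_ge {x : ℝ} (hx : c - b ≤ x) :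
    expDensity lam x * exp (-max b (c - x) / lam) = exp (-b / lam) * expDensity lam x := by
  rw [max_eq_left (by linarith), mul_comm]

lemma integral_Ioi_expDensity_mul_exp_max (hlam : 0 < lam) (habc : a ≤ c - b) :
    ∫ x in Ioi a, expDensity lam x * exp (-max b (c - x) / lam)
      = (1 + (c - a - b) / lam) * exp (-c / lam) := by
  set f := fun x => expDensity lam x * exp (-max b (c - x) / lam)
  have hmid : EqOn f (fun _ => 1 / lam * exp (-c / lam)) (Ioc a (c - b)) :=
    fun x hx => expDensity_mul_exp_max_of_le hx.2
  have htail : EqOn f (fun x => exp (-b / lam) * expDensity lam x) (Ioi (c - b)) :=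
    fun x hx => expDensity_mul_exp_max_of_ge (le_of_lt hx)
  have hint_mid : IntegrableOn f (Ioc a (c - b)) :=
    (integrableOn_const measure_Ioc_lt_top.ne).congr_fun hmid.symm measurableSet_Ioc
  have hint_tail : IntegrableOn f (Ioi (c - b)) :=
    IntegrableOn.congr_fun ((integrableOn_expDensity_Ioi hlam _).const_mul _) htail.symm
      measurableSet_Ioi
  rw [← Ioc_union_Ioi_eq_Ioi habc,
    setIntegral_union (Ioc_disjoint_Ioi le_rfl) measurableSet_Ioi hint_mid hint_tail,
    setIntegral_congr_fun measurableSet_Ioc hmid, setIntegral_congr_fun measurableSet_Ioi htail,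
    setIntegral_const, integral_const_mul, integral_expDensity_Ioi hlam,
    Real.volume_real_Ioc_of_le habc, smul_eq_mul, ← exp_add]
  field_simp
  ring_nf

lemma integral_joint_expDensity_region (hlam : 0 < lam) (ha : 0 < a) (hb : 0 < b)
    (habc : a + b ≤ c) :
    ∫ x in Ioi 0, ∫ y in Ioi 0, (if c ≤ x + y ∧ a ≤ x ∧ b ≤ y then (1 : ℝ) else 0) *
        expDensity lam x * expDensity lam y
      = (1 + (c - a - b) / lam) * exp (-c / lam) := by
  simp_rw [integral_joint_expDensity_slice hlam hb]
  rw [setIntegral_indicator measurableSet_Ici, inter_eq_right.mpr (Ici_subset_Ioi.mpr ha),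
    integral_Ici_eq_integral_Ioi, integral_Ioi_expDensity_mul_exp_max hlam (by linarith)]

theorem stmt_5_general (Δs Δd Δ lam z : ℝ)
    (hΔs : 0 < Δs) (hΔd : 0 < Δd) (hΔ : Δ = Δs + Δd + Δs * Δd)
    (hlam : 0 < lam) (hz : 0 < z) :
    (∫ x in Set.Ioi (0:ℝ), ∫ y in Set.Ioi (0:ℝ),
        (if Δ * z ≤ x + y ∧ Δs * z ≤ x ∧ Δd * z ≤ y then (1:ℝ) else 0) *
          ((1 / lam) * Real.exp (-x / lam)) * ((1 / lam) * Real.exp (-y / lam)))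
      = (1 + Δs * Δd * z / lam) * Real.exp (-(Δ * z) / lam) := by
  have hcross : Δs * Δd * z = Δ * z - Δs * z - Δd * z := by rw [hΔ]; ring
  rw [hcross]
  exact integral_joint_expDensity_region hlam (by positivity) (by positivity)
    (by nlinarith [mul_pos (mul_pos hΔs hΔd) hz])

/-- Relay decoding success probability in the degenerate case of equal mean received SNRs
`γs σs² = γd σd² = λ`: `P(X+Y ≥ Δz, X ≥ Δs z, Y ≥ Δd z) = (1 + Δs Δd z/λ) e^{-Δz/λ}`. -/
theorem stmt_5 (Δs Δd Δ γs γd σs σd lam z : ℝ)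
    (hΔs : 0 < Δs) (hΔd : 0 < Δd) (hΔ : Δ = Δs + Δd + Δs * Δd)
    (hσs : 0 < σs) (hσd : 0 < σd) (hlam : 0 < lam)
    (hs : γs * σs = lam) (hd : γd * σd = lam) (hz : 0 < z) :
    (∫ x in Set.Ioi (0:ℝ), ∫ y in Set.Ioi (0:ℝ),
        (if Δ * z ≤ x + y ∧ Δs * z ≤ x ∧ Δd * z ≤ y then (1:ℝ) else 0) *
          ((1 / lam) * Real.exp (-x / lam)) * ((1 / lam) * Real.exp (-y / lam)))
      = (1 + Δs * Δd * z / lam) * Real.exp (-(Δ * z) / lam) :=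
  stmt_5_general Δs Δd Δ lam z hΔs hΔd hΔ hlam hz
end

section
/- Let A, B, g > 0 with g > 1. The function F(x, y) = Δ_s/(x σ_s²) + Δ_d/(y σ_d²) (with Δ_s, Δ_d, σ_s², σ_d² > 0 fixed) attains its minimum over the constraint set {(x,y) : x > 0, y > 0, (1 + A x)(1 + B y) = g} at x* = (g - 1)/(√(Δ_d σ_s² A B g/(Δ_s σ_d²)) + A) and y* = (g - 1)/(√(Δ_s σ_d² A B g/(Δ_d σ_s²)) + B). -/
/-!
Put `a = Δs/σs` and `b = Δd/σd`. On the constraint, `g - 1 = A x + B y + A B x y`, so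
`(g - 1) (a/x + b/y) = A a + B b + p + q` with `p = a B y (1 + A x)/x`, `q = b A x (1 + B y)/y`.
Since `p q = a b A B g` is constant on the constraint, AM–GM gives
`(g - 1) (a/x + b/y) ≥ A a + B b + 2 √(a b A B g)`, and the candidate point is exactly where
`p = q`, so it attains this bound.
-/

open Real

lemma two_sqrt_mul_le_add {p q : ℝ} (hp : 0 ≤ p) (hq : 0 ≤ q) : 2 * √(p * q) ≤ p + q := by
  have h : √(p * q) ≤ (p + q) / 2 :=
    Real.sqrt_le_iff.mpr ⟨by positivity, by nlinarith [four_mul_le_sq_add p q]⟩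
  linarith

section Constraint

variable {a b A B g x y : ℝ}

lemma sub_one_mul_add_div_eq (hx : 0 < x) (hy : 0 < y) (h : (1 + A * x) * (1 + B * y) = g) :
    (g - 1) * (a / x + b / y) =
      A * a + B * b + (a * B * y * (1 + A * x) / x + b * A * x * (1 + B * y) / y) := by
  rw [← h]
  field_simp
  ring

lemma add_add_two_sqrt_le_sub_one_mul (ha : 0 ≤ a) (hb : 0 ≤ b) (hA : 0 ≤ A) (hB : 0 ≤ B)
    (hx : 0 < x) (hy : 0 < y) (h : (1 + A * x) * (1 + B * y) = g) :
    A * a + B * b + 2 * √(a * b * A * B * g) ≤ (g - 1) * (a / x + b / y) := by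
  have hprod : a * B * y * (1 + A * x) / x * (b * A * x * (1 + B * y) / y) =
      a * b * A * B * g := by
    rw [← h]
    field_simp
  rw [sub_one_mul_add_div_eq hx hy h, ← hprod]
  gcongr
  exact two_sqrt_mul_le_add (by positivity) (by positivity)

end Constraint

-- With `a = Δs/σs` and `b = Δd/σd`, `x* = optPower a b A B g` and `y* = optPower b a B A g`.
noncomputable def optPower (a b A B g : ℝ) : ℝ := (g - 1) / (√(b * A * B * g / a) + A)

section OptPower

variable {a b A B g : ℝ}

lemma sqrt_mul_sqrt_optPower (ha : 0 < a) (hb : 0 < b) (hA : 0 < A) (hB : 0 < B) (hg : 0 ≤ g) :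
    √(b * A * B * g / a) * √(a * B * A * g / b) = A * B * g := by
  rw [← Real.sqrt_mul (by positivity),
    show b * A * B * g / a * (a * B * A * g / b) = (A * B * g) ^ 2 by field_simp,
    Real.sqrt_sq (by positivity)]

lemma sub_one_mul_div_optPower (ha : 0 < a) (hA : 0 < A) (hg : 1 < g) :
    (g - 1) * (a / optPower a b A B g) = A * a + √(a * b * A * B * g) := by
  rw [show a * b * A * B * g = a ^ 2 * (b * A * B * g / a) by field_simp,
    Real.sqrt_mul (sq_nonneg a), Real.sqrt_sq ha.le, optPower]
  have hs : 0 ≤ √(b * A * B * g / a) := Real.sqrt_nonneg _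
  field_simp [(sub_pos.mpr hg).ne']
  ring

lemma constraint_optPower (ha : 0 < a) (hb : 0 < b) (hA : 0 < A) (hB : 0 < B) (hg : 0 ≤ g) :
    (1 + A * optPower a b A B g) * (1 + B * optPower b a B A g) = g := by
  have hst := sqrt_mul_sqrt_optPower ha hb hA hB hg
  have hs : 0 ≤ √(b * A * B * g / a) := Real.sqrt_nonneg _
  have ht : 0 ≤ √(a * B * A * g / b) := Real.sqrt_nonneg _
  unfold optPower
  generalize √(b * A * B * g / a) = s, √(a * B * A * g / b) = t at hst hs ht ⊢
  field_simp
  linear_combination (1 - g) * hst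

theorem div_optPower_add_div_optPower_le (ha : 0 < a) (hb : 0 < b) (hA : 0 < A) (hB : 0 < B)
    (hg : 1 < g) {x y : ℝ} (hx : 0 < x) (hy : 0 < y) (h : (1 + A * x) * (1 + B * y) = g) :
    a / optPower a b A B g + b / optPower b a B A g ≤ a / x + b / y := by
  refine le_of_mul_le_mul_left ?_ (sub_pos.mpr hg)
  rw [mul_add, sub_one_mul_div_optPower ha hA hg,
    sub_one_mul_div_optPower hb hB hg,
    show b * a * B * A * g = a * b * A * B * g by ring]
  linarith [add_add_two_sqrt_le_sub_one_mul ha.le hb.le hA.le hB.le hx hy h]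

end OptPower

/-- Optimal secondary power allocation (Lemma 1, case 2): the pair `(x*, y*)` satisfies
the QoS constraint with equality and minimizes `F(x,y) = Δs/(x σs²) + Δd/(y σd²)` over
the constraint set `{(x,y) : x,y > 0, (1+Ax)(1+By) = g}`. -/
theorem stmt_6 (A B g Δs Δd σs σd : ℝ)
    (hA : 0 < A) (hB : 0 < B) (hg : 1 < g)
    (hΔs : 0 < Δs) (hΔd : 0 < Δd) (hσs : 0 < σs) (hσd : 0 < σd) :
    (1 + A * ((g - 1) / (Real.sqrt (Δd * σs * A * B * g / (Δs * σd)) + A))) *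
        (1 + B * ((g - 1) / (Real.sqrt (Δs * σd * A * B * g / (Δd * σs)) + B))) = g ∧
    ∀ x y : ℝ, 0 < x → 0 < y → (1 + A * x) * (1 + B * y) = g →
      Δs / (((g - 1) / (Real.sqrt (Δd * σs * A * B * g / (Δs * σd)) + A)) * σs) +
          Δd / (((g - 1) / (Real.sqrt (Δs * σd * A * B * g / (Δd * σs)) + B)) * σd)
        ≤ Δs / (x * σs) + Δd / (y * σd) := by
  have hx_opt : (g - 1) / (√(Δd * σs * A * B * g / (Δs * σd)) + A) =
      optPower (Δs / σs) (Δd / σd) A B g := by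
    rw [optPower]; congr 3; field_simp
  have hy_opt : (g - 1) / (√(Δs * σd * A * B * g / (Δd * σs)) + B) =
      optPower (Δd / σd) (Δs / σs) B A g := by
    rw [optPower]; congr 3; field_simp
  rw [hx_opt, hy_opt]
  simp only [div_mul_eq_div_div_swap]
  exact ⟨constraint_optPower (by positivity) (by positivity) hA hB (by linarith),
    fun _ _ hx hy h ↦
      div_optPower_add_div_optPower_le (by positivity) (by positivity) hA hB hg hx hy h⟩
end

section
/- Let a > 1, b > 0, c > 1, d > 0 with ab ≠ cd. Define f(α) = A(α) + B(α) - A(α)B(α) for α ∈ (0,1), where A(α) = 1/(a·(1 + b(1-α))) and B(α) = 1/(c·(1 + dα)). Then f attains its minimum on (0,1) at α* = (ab + a + c - 1)/(ab - cd) - √((ab - d + ad + abd)(bc - b + cd + bcd))/(√(bd)·(ab - cd)), provided α* ∈ (0,1). -/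
set_option maxHeartbeats 1600000
set_option maxRecDepth 8000

open Real

/-- Relay power-ratio optimization (Lemma 3, case `ab ≠ cd`): the outage probability
`f(α) = A(α) + B(α) - A(α)B(α)` attains its minimum on `(0,1)` at `α*`, provided
`α* ∈ (0,1)`. -/
theorem stmt_7 (a b c d : ℝ) (ha : 1 < a) (hb : 0 < b) (hc : 1 < c) (hd : 0 < d)
    (hne : a * b ≠ c * d)
    (hmem : (a * b + a + c - 1) / (a * b - c * d) -
        Real.sqrt ((a * b - d + a * d + a * b * d) * (b * c - b + c * d + b * c * d)) /
          (Real.sqrt (b * d) * (a * b - c * d)) ∈ Set.Ioo (0:ℝ) 1) :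
    ∀ α ∈ Set.Ioo (0:ℝ) 1,
      (fun α : ℝ => 1 / (a * (1 + b * (1 - α))) + 1 / (c * (1 + d * α)) -
          (1 / (a * (1 + b * (1 - α)))) * (1 / (c * (1 + d * α))))
          ((a * b + a + c - 1) / (a * b - c * d) -
            Real.sqrt ((a * b - d + a * d + a * b * d) * (b * c - b + c * d + b * c * d)) /
              (Real.sqrt (b * d) * (a * b - c * d)))
        ≤ 1 / (a * (1 + b * (1 - α))) + 1 / (c * (1 + d * α)) -
            (1 / (a * (1 + b * (1 - α)))) * (1 / (c * (1 + d * α))) := by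
  intro α hα
  obtain ⟨hα0, hα1⟩ := hα
  obtain ⟨S, hSdef⟩ : ∃ S : ℝ,
      S = Real.sqrt ((a * b - d + a * d + a * b * d) * (b * c - b + c * d + b * c * d)) :=
    ⟨_, rfl⟩
  obtain ⟨T, hTdef⟩ : ∃ T : ℝ, T = Real.sqrt (b * d) := ⟨_, rfl⟩
  rw [← hSdef, ← hTdef] at hmem ⊢
  obtain ⟨x, hxdef⟩ : ∃ x : ℝ,
      x = (a * b + a + c - 1) / (a * b - c * d) - S / (T * (a * b - c * d)) := ⟨_, rfl⟩
  rw [← hxdef] at hmem ⊢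
  obtain ⟨hx0, hx1⟩ := hmem
  have hE : a * b - c * d ≠ 0 := sub_ne_zero.mpr hne
  have hT0 : 0 < T := by rw [hTdef]; exact Real.sqrt_pos.mpr (by positivity)
  have hT2 : T ^ 2 = b * d := by rw [hTdef]; exact Real.sq_sqrt (by positivity)
  have hp1 : 0 < a * b - d + a * d + a * b * d := by nlinarith
  have hp2 : 0 < b * c - b + c * d + b * c * d := by nlinarith
  have hS2 : S ^ 2 = (a * b - d + a * d + a * b * d) * (b * c - b + c * d + b * c * d) := by
    rw [hSdef]; exact Real.sq_sqrt (by positivity)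
  have hSx : S = T * ((a * b + a + c - 1) - (a * b - c * d) * x) := by
    rw [hxdef]; field_simp; ring
  have hP : b * d * ((a * b + a + c - 1) - (a * b - c * d) * x) ^ 2 =
      (a * b - d + a * d + a * b * d) * (b * c - b + c * d + b * c * d) := by
    rw [hSx] at hS2
    linear_combination hS2 - ((a * b + a + c - 1) - (a * b - c * d) * x) ^ 2 * hT2
  have hu : (0:ℝ) < 1 + b * (1 - α) := by nlinarith
  have hv : (0:ℝ) < 1 + d * α := by nlinarith
  have hu0 : (0:ℝ) < 1 + b * (1 - x) := by nlinarith
  have hv0 : (0:ℝ) < 1 + d * x := by nlinarith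
  -- key algebraic identity
  have hM : (a * b - c * d) *
        ((a * (1 + b * (1 - α)) + c * (1 + d * α) - 1) * ((1 + b * (1 - x)) * (1 + d * x)) -
          (a * (1 + b * (1 - x)) + c * (1 + d * x) - 1) * ((1 + b * (1 - α)) * (1 + d * α))) =
      (a * b - c * d) *
        (b * d * (a * (1 + b * (1 - x)) + c * (1 + d * x) - 1) * (α - x) ^ 2) := by
    linear_combination (x - α) * hP
  have hM' := mul_left_cancel₀ hE hM
  have hk : 0 < a * (1 + b * (1 - x)) + c * (1 + d * x) - 1 := by nlinarith
  have hMnn : 0 ≤ (a * (1 + b * (1 - α)) + c * (1 + d * α) - 1) *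
        ((1 + b * (1 - x)) * (1 + d * x)) -
      (a * (1 + b * (1 - x)) + c * (1 + d * x) - 1) * ((1 + b * (1 - α)) * (1 + d * α)) := by
    rw [hM']
    exact mul_nonneg (mul_nonneg (mul_nonneg hb.le hd.le) hk.le) (sq_nonneg _)
  show 1 / (a * (1 + b * (1 - x))) + 1 / (c * (1 + d * x)) -
      (1 / (a * (1 + b * (1 - x)))) * (1 / (c * (1 + d * x))) ≤ _
  have e1 : 1 / (a * (1 + b * (1 - x))) + 1 / (c * (1 + d * x)) -
      (1 / (a * (1 + b * (1 - x)))) * (1 / (c * (1 + d * x))) =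
      (a * (1 + b * (1 - x)) + c * (1 + d * x) - 1) /
        (a * c * ((1 + b * (1 - x)) * (1 + d * x))) := by
    field_simp; ring
  have e2 : 1 / (a * (1 + b * (1 - α))) + 1 / (c * (1 + d * α)) -
      (1 / (a * (1 + b * (1 - α)))) * (1 / (c * (1 + d * α))) =
      (a * (1 + b * (1 - α)) + c * (1 + d * α) - 1) /
        (a * c * ((1 + b * (1 - α)) * (1 + d * α))) := by
    field_simp; ring
  rw [e1, e2, div_le_div_iff₀ (by positivity) (by positivity)]
  nlinarith [mul_nonneg (by positivity : (0:ℝ) ≤ a * c) hMnn]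
end

section
/- Let a > 1, b > 0, c > 1, d > 0 with ab = cd. Define f(α) = A(α) + B(α) - A(α)B(α), A(α) = 1/(a(1 + b(1-α))), B(α) = 1/(c(1 + dα)). Then f'(α) = 0 at α* = (bd + d - b)/(2bd). -/
open Real

/-- Relay power-ratio optimization, degenerate case `ab = cd` (Lemma 3): the derivative
of the outage probability `f(α) = A(α) + B(α) - A(α)B(α)` vanishes at
`α* = (bd + d - b)/(2bd)`. -/
theorem stmt_8 (a b c d : ℝ) (ha : 1 < a) (hb : 0 < b) (hc : 1 < c) (hd : 0 < d)
    (heq : a * b = c * d) :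
    deriv (fun α : ℝ => 1 / (a * (1 + b * (1 - α))) + 1 / (c * (1 + d * α)) -
        (1 / (a * (1 + b * (1 - α)))) * (1 / (c * (1 + d * α))))
      ((b * d + d - b) / (2 * b * d)) = 0 := by
  have ha0 : (0:ℝ) < a := lt_trans one_pos ha
  have hc0 : (0:ℝ) < c := lt_trans one_pos hc
  set α₀ : ℝ := (b * d + d - b) / (2 * b * d) with hα
  have hbne : b ≠ 0 := ne_of_gt hb
  have hdne : d ≠ 0 := ne_of_gt hd
  have h1 : 1 + b * (1 - α₀) = (b + d + b*d) / (2*d) := by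
    rw [hα]; field_simp; ring
  have h2 : 1 + d * α₀ = (b + d + b*d) / (2*b) := by
    rw [hα]; field_simp; ring
  have hu : a * (1 + b * (1 - α₀)) ≠ 0 := by
    rw [h1]; positivity
  have hv : c * (1 + d * α₀) ≠ 0 := by
    rw [h2]; positivity
  have hU : HasDerivAt (fun α : ℝ => a * (1 + b * (1 - α))) (a * (b * (-1))) α₀ := by
    exact (((hasDerivAt_id α₀).const_sub 1).const_mul b |>.const_add 1 |>.const_mul a)
  have hV : HasDerivAt (fun α : ℝ => c * (1 + d * α)) (c * d) α₀ := by
    simpa using ((hasDerivAt_id α₀).const_mul d |>.const_add 1 |>.const_mul c)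
  have hA : HasDerivAt (fun α : ℝ => (a * (1 + b * (1 - α)))⁻¹)
      (-(a * (b * (-1))) / (a * (1 + b * (1 - α₀)))^2) α₀ := hU.inv hu
  have hB : HasDerivAt (fun α : ℝ => (c * (1 + d * α))⁻¹)
      (-(c * d) / (c * (1 + d * α₀))^2) α₀ := hV.inv hv
  have hf : HasDerivAt (fun α : ℝ => 1 / (a * (1 + b * (1 - α))) + 1 / (c * (1 + d * α)) -
        (1 / (a * (1 + b * (1 - α)))) * (1 / (c * (1 + d * α))))
      ((-(a * (b * (-1))) / (a * (1 + b * (1 - α₀)))^2) + (-(c * d) / (c * (1 + d * α₀))^2)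
        - ((-(a * (b * (-1))) / (a * (1 + b * (1 - α₀)))^2) * (c * (1 + d * α₀))⁻¹
          + (a * (1 + b * (1 - α₀)))⁻¹ * (-(c * d) / (c * (1 + d * α₀))^2))) α₀ := by
    simp only [one_div]
    exact (hA.add hB).sub (hA.mul hB)
  rw [hf.deriv]
  rw [h1, h2]
  have hS : b + d + b*d ≠ 0 := by positivity
  have ha' : a = c*d/b := by
    field_simp
    linarith [heq]
  rw [ha']
  have hcd : c*d ≠ 0 := by positivity
  field_simp
  ring
end

section
/- Let X have the two-sided density f(x) = K·exp(-(x-Δ_d)/p) for x > Δ_d and f(x) = K·exp((x-Δ_d)/q) for x < Δ_d, where p = Δ_d γ_u σ_{us}², q = γ_d σ_{ds}², K = 1/(p+q). Then for any r > 0, E[exp(-X/r)·1{X > 0}] = K·[ (exp(-Δ_d/q) - exp(-Δ_d/r)) / (1/r - 1/q) + exp(-Δ_d/r)/(1/r + 1/p) ] whenever r ≠ q. -/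
open MeasureTheory Real Set

/-! Split the integral at `Δd`. On `(0, Δd)` and on `(Δd, ∞)` the integrand is `K` times a single
exponential `exp (c * x + e)`, whose integral is elementary; on `(Δd, ∞)` the rate `1 / r + 1 / p`
is positive, so the tail converges. -/

lemma intervalIntegral_exp_mul (a b : ℝ) {c : ℝ} (hc : c ≠ 0) :
    ∫ x in a..b, exp (c * x) = (exp (c * b) - exp (c * a)) / c := by
  rw [intervalIntegral.integral_comp_mul_left (fun x => exp x) hc, integral_exp, smul_eq_mul,
    inv_mul_eq_div]

lemma integral_eq_integral_Ioo_add_integral_Ioi {f : ℝ → ℝ} {d : ℝ} (hd : 0 < d)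
    (hf : ∀ x ≤ 0, f x = 0) (h₁ : IntegrableOn f (Ioo 0 d)) (h₂ : IntegrableOn f (Ioi d)) :
    ∫ x, f x = (∫ x in Ioo 0 d, f x) + ∫ x in Ioi d, f x := by
  rw [← setIntegral_eq_integral_of_forall_compl_eq_zero (s := Ioi 0)
      (fun x hx => hf x (not_lt.mp hx)), ← Ioc_union_Ioi_eq_Ioi hd.le,
    setIntegral_union (Ioc_disjoint_Ioi le_rfl) measurableSet_Ioi
      ((integrableOn_Ioc_iff_integrableOn_Ioo).2 h₁) h₂, integral_Ioc_eq_integral_Ioo]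

lemma integral_Ioo_exp_neg_div_mul_exp_div {d q r : ℝ} (hd : 0 ≤ d) (hqr : q ≠ r) :
    ∫ x in Ioo 0 d, exp (-x / r) * exp ((x - d) / q)
      = (exp (-d / q) - exp (-d / r)) / (1 / r - 1 / q) := by
  have hc : 1 / q - 1 / r ≠ 0 := by
    simpa [sub_eq_zero, one_div] using hqr
  have h : ∀ x, exp (-x / r) * exp ((x - d) / q) = exp (-d / q) * exp ((1 / q - 1 / r) * x) := by
    intro x
    rw [← exp_add, ← exp_add]; ring_nf
  simp_rw [h]
  rw [integral_const_mul, ← integral_Ioc_eq_integral_Ioo, ← intervalIntegral.integral_of_le hd,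
    intervalIntegral_exp_mul _ _ hc, mul_zero, exp_zero]
  have e : exp (-d / q) * exp ((1 / q - 1 / r) * d) = exp (-d / r) := by
    rw [← exp_add]; ring_nf
  rw [mul_div_assoc', mul_sub, e, mul_one, ← neg_sub (1 / r), div_neg, ← neg_div, neg_sub]

lemma integral_Ioi_exp_neg_div_mul_exp_neg_div {d p r : ℝ} (hpr : 0 < 1 / r + 1 / p) :
    ∫ x in Ioi d, exp (-x / r) * exp (-(x - d) / p) = exp (-d / r) / (1 / r + 1 / p) := by
  have h : ∀ x, exp (-x / r) * exp (-(x - d) / p)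
      = exp (d / p) * exp (-(1 / r + 1 / p) * x) := by
    intro x
    rw [← exp_add, ← exp_add]; ring_nf
  simp_rw [h]
  rw [integral_const_mul, integral_exp_mul_Ioi (neg_lt_zero.mpr hpr), mul_div_assoc', mul_neg,
    ← exp_add, div_neg, neg_div, neg_neg]
  ring_nf

theorem stmt_11_general (Δd γu σus p q K r : ℝ)
    (hΔd : 0 < Δd) (hγu : 0 < γu) (hσus : 0 < σus)
    (hp : p = Δd * γu * σus)
    (hr : 0 < r) (hrq : r ≠ q) :
    (∫ x : ℝ,
        (if 0 < x then Real.exp (-x / r) else 0) *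
          (if x < Δd then K * Real.exp ((x - Δd) / q)
           else K * Real.exp (-(x - Δd) / p)))
      = K * ((Real.exp (-Δd / q) - Real.exp (-Δd / r)) / (1 / r - 1 / q)
          + Real.exp (-Δd / r) / (1 / r + 1 / p)) := by
  set f : ℝ → ℝ := fun x => (if 0 < x then exp (-x / r) else 0) *
    (if x < Δd then K * exp ((x - Δd) / q) else K * exp (-(x - Δd) / p))
  have hpr : 0 < 1 / r + 1 / p := by rw [hp]; positivity
  have hleft := integral_Ioo_exp_neg_div_mul_exp_div hΔd.le hrq.symm
  have hright := integral_Ioi_exp_neg_div_mul_exp_neg_div (d := Δd) hpr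
  have hf_Ioo : EqOn f (fun x => K * (exp (-x / r) * exp ((x - Δd) / q))) (Ioo 0 Δd) := by
    intro x hx
    simp only [f, if_pos hx.1, if_pos hx.2]
    ring
  have hf_Ioi : EqOn f (fun x => K * (exp (-x / r) * exp (-(x - Δd) / p))) (Ioi Δd) := by
    intro x (hx : Δd < x)
    simp only [f, if_pos (hΔd.trans hx), if_neg (not_lt.2 hx.le)]
    ring
  rw [integral_eq_integral_Ioo_add_integral_Ioi hΔd, setIntegral_congr_fun measurableSet_Ioo hf_Ioo,
    setIntegral_congr_fun measurableSet_Ioi hf_Ioi, integral_const_mul, integral_const_mul, hleft,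
    hright, mul_add]
  · intro x hx
    simp [not_lt.2 hx]
  · refine IntegrableOn.congr_fun ?_ hf_Ioo.symm measurableSet_Ioo
    exact (by fun_prop : Continuous _).integrableOn_Icc.mono_set Ioo_subset_Icc_self
  · refine IntegrableOn.congr_fun ?_ hf_Ioi.symm measurableSet_Ioi
    -- the tail is integrable because its integral, computed above, is nonzero
    exact (Integrable.of_integral_ne_zero (hright ▸ (div_pos (exp_pos _) hpr).ne')).const_mul K

/-- Key integral of equation (12): `E[exp(-X/r)·1{X > 0}]` for `X` with the two-sided
exponential density of Appendix C, `p = Δd γu σus²`, `q = γd σds²`, `K = 1/(p+q)`. -/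
theorem stmt_11 (Δd γu γd σus σds p q K r : ℝ)
    (hΔd : 0 < Δd) (hγu : 0 < γu) (hγd : 0 < γd) (hσus : 0 < σus) (hσds : 0 < σds)
    (hp : p = Δd * γu * σus) (hq : q = γd * σds) (hK : K = 1 / (p + q))
    (hr : 0 < r) (hrq : r ≠ q) :
    (∫ x : ℝ,
        (if 0 < x then Real.exp (-x / r) else 0) *
          (if x < Δd then K * Real.exp ((x - Δd) / q)
           else K * Real.exp (-(x - Δd) / p)))
      = K * ((Real.exp (-Δd / q) - Real.exp (-Δd / r)) / (1 / r - 1 / q)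
          + Real.exp (-Δd / r) / (1 / r + 1 / p)) :=
  stmt_11_general Δd γu σus p q K r hΔd hγu hσus hp hr hrq
end

section
/- Let ρ_d, ρ_s, Δ_s, Δ_d, σ_{us}², σ_{ud}², σ_{ds}², σ_{sd}² > 0 and for γ > 0 define F(γ) = 1 - [2 ρ_d γ σ_{ds}² exp(-Δ_d/(2 ρ_d γ σ_{ds}²)) / (2 ρ_d γ σ_{ds}² + Δ_d γ σ_{us}²)] · [2 ρ_s γ σ_{sd}² exp(-Δ_s/(2 ρ_s γ σ_{sd}²)) / (2 ρ_s γ σ_{sd}² + Δ_s γ σ_{ud}²)]. Then lim_{γ→∞} F(γ) = (2ρ_d σ_{ds}² Δ_s σ_{ud}² + 2ρ_s σ_{sd}² Δ_d σ_{us}² + Δ_d σ_{us}² Δ_s σ_{ud}²) / ((2ρ_d σ_{ds}² + Δ_d σ_{us}²)(2ρ_s σ_{sd}² + Δ_s σ_{ud}²)). -/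
open Real Filter Topology

/-
After cancelling the common factor `γ`, each bracket reads
`k · exp(-(c / k) / γ) / (k + m)`, whose exponential tends to `1`; so the bracket tends to
`k / (k + m)` and the floor is `1 - k₁ k₂ / ((k₁ + m₁)(k₂ + m₂))`.
-/

theorem tendsto_mul_exp_div_add_atTop (k m c : ℝ) :
    Tendsto (fun γ : ℝ => k * γ * exp (-c / (k * γ)) / (k * γ + m * γ)) atTop
      (𝓝 (k / (k + m))) := by
  have hexp : Tendsto (fun γ : ℝ => exp (-c / k / γ)) atTop (𝓝 1) := by
    simpa [Function.comp_def] using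
      (continuous_exp.tendsto 0).comp (tendsto_const_nhds.div_atTop tendsto_id)
  have hlim := (hexp.const_mul k).div_const (k + m)
  rw [mul_one] at hlim
  refine hlim.congr' ?_
  filter_upwards [eventually_ne_atTop 0] with γ hγ
  rw [← add_mul, mul_right_comm, mul_div_mul_right _ _ hγ, div_mul_eq_div_div]

/-- Asymptotic direct-link outage floor (Section V): with secondary SNRs proportional to
the primary SNR `γ`, the conditional outage probability `P(out | D = ∅)` of equation (11)
tends to a constant floor as `γ → ∞`. -/
theorem stmt_14 (ρd ρs Δs Δd σus σud σds σsd : ℝ)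
    (hρd : 0 < ρd) (hρs : 0 < ρs) (hΔs : 0 < Δs) (hΔd : 0 < Δd)
    (hσus : 0 < σus) (hσud : 0 < σud) (hσds : 0 < σds) (hσsd : 0 < σsd) :
    Filter.Tendsto
      (fun γ : ℝ => 1 -
        (2 * ρd * γ * σds * Real.exp (-Δd / (2 * ρd * γ * σds)) /
            (2 * ρd * γ * σds + Δd * γ * σus)) *
        (2 * ρs * γ * σsd * Real.exp (-Δs / (2 * ρs * γ * σsd)) /
            (2 * ρs * γ * σsd + Δs * γ * σud)))
      Filter.atTop
      (nhds ((2 * ρd * σds * Δs * σud + 2 * ρs * σsd * Δd * σus + Δd * σus * Δs * σud) /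
        ((2 * ρd * σds + Δd * σus) * (2 * ρs * σsd + Δs * σud)))) := by
  have hd := tendsto_mul_exp_div_add_atTop (2 * ρd * σds) (Δd * σus) Δd
  have hs := tendsto_mul_exp_div_add_atTop (2 * ρs * σsd) (Δs * σud) Δs
  convert (hd.mul hs).const_sub 1 using 1
  · funext γ
    ring_nf
  · have hd₀ : 2 * ρd * σds + Δd * σus ≠ 0 := by positivity
    have hs₀ : 2 * ρs * σsd + Δs * σud ≠ 0 := by positivity
    congr 1
    field_simp
    ring
end
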